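/- Let G = (Σ, N, A_1, R, p) be a proper, reduced stochastic context-free grammar with nonterminals N = {A_1, …, A_m}, and let M be the expectation matrix M_{i,n} = Σ_j p(A_i → B_{i,j}) · r_n(i,j), where r_n(i,j) is the number of occurrences of A_n in the right-hand side B_{i,j}. If ρ(M) < 1, then for every nonterminal A_i (1 ≤ i ≤ m) one has Σ_{π̄ ∈ Ω_i} p(π̄) = 1, where Ω_i is the set of all complete leftmost derivations starting at A_i and ending in a terminal string. -/

import Mathlib

/-- A stochastic context-free grammar with nonterminals `Fin m` (start symbol `0`,
playing the role of `A₁`), terminals `Fin k`, rules indexed by the finite type `ρ`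
(with premise `prem π` and right-hand side `rhs π`), and a weight
`p : ρ → [0,1]`. -/
structure SCFG (m k : ℕ) (ρ : Type) [Fintype ρ] where
  prem : ρ → Fin m
  rhs : ρ → List (Fin m ⊕ Fin k)
  p : ρ → ℝ
  p_nonneg : ∀ π, 0 ≤ p π
  p_le_one : ∀ π, p π ≤ 1

namespace SCFG

variable {m k : ℕ} {ρ : Type} [Fintype ρ] (G : SCFG m k ρ)

/-- The leftmost rewriting relation: `s` rewrites to `s'` by applying rule `π` to the
leftmost nonterminal of `s`. -/
def LeftmostStep (s : List (Fin m ⊕ Fin k)) (π : ρ) (s' : List (Fin m ⊕ Fin k)) : Prop :=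
  ∃ (u : List (Fin k)) (δ : List (Fin m ⊕ Fin k)),
    s = u.map Sum.inr ++ Sum.inl (G.prem π) :: δ ∧
    s' = u.map Sum.inr ++ G.rhs π ++ δ

/-- `StepSeq s l s'`: applying the rules of the list `l` in turn, each rewriting the
leftmost nonterminal, transforms the sentential form `s` into `s'`. -/
inductive StepSeq : List (Fin m ⊕ Fin k) → List ρ → List (Fin m ⊕ Fin k) → Prop
  | nil (s : List (Fin m ⊕ Fin k)) : StepSeq s [] s
  | cons {s s' s'' : List (Fin m ⊕ Fin k)} {π : ρ} {l : List ρ} :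
      G.LeftmostStep s π s' → StepSeq s' l s'' → StepSeq s (π :: l) s''

/-- A sentential form consisting only of terminals. -/
def IsTerminalString (s : List (Fin m ⊕ Fin k)) : Prop :=
  ∃ u : List (Fin k), s = u.map Sum.inr

/-- `CompleteDeriv i l`: the rule list `l` is a complete leftmost derivation starting
at the nonterminal `i` and ending in a terminal string. -/
def CompleteDeriv (i : Fin m) (l : List ρ) : Prop :=
  ∃ s, G.StepSeq [Sum.inl i] l s ∧ IsTerminalString s

/-- The probability of a derivation: the product of the probabilities of its rules. -/
def weight (l : List ρ) : ℝ := (l.map G.p).prod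

/-- `G` is proper: for each nonterminal, the weights of the rules with that premise
sum to `1`. -/
def Proper : Prop :=
  ∀ i : Fin m, ∑ π ∈ Finset.univ.filter (fun π => G.prem π = i), G.p π = 1

/-- A nonterminal is productive if some complete leftmost derivation starts at it. -/
def Productive (i : Fin m) : Prop := ∃ l, G.CompleteDeriv i l

/-- A nonterminal is accessible if some leftmost derivation sequence from the start
symbol produces a sentential form containing it. -/
def Accessible [NeZero m] (i : Fin m) : Prop :=
  ∃ l s, G.StepSeq [Sum.inl (0 : Fin m)] l s ∧ Sum.inl i ∈ s

/-- The expectation matrix `M i n = ∑_j p(Aᵢ → B_{i,j}) · r_n(i,j)`, where `r_n(i,j)`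
is the number of occurrences of the nonterminal `n` in the right-hand side of the
`j`-th rule with premise `i`. -/
noncomputable def expectationMatrix : Matrix (Fin m) (Fin m) ℝ :=
  fun i n => ∑ π ∈ Finset.univ.filter (fun π => G.prem π = i),
    G.p π * ((G.rhs π).count (Sum.inl n) : ℝ)

end SCFG


/-! Let `q X` be the total probability of the complete leftmost derivations from a symbol `X`,
a sum in `[0, ∞]`. Splitting a derivation at its first rule, and a derivation of `s ++ t` into
one of `s` followed by one of `t`, gives `q Aᵢ = ∑ p(π) ∏_{X ∈ rhs π} q X`; an induction on the
length of derivations bounds these sums by `1`. Since `1 - ∏ xⱼ ≤ ∑ (1 - xⱼ)` on `[0, 1]`, the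
defect `v = 1 - q` then satisfies `v ≤ M v`, hence `v ≤ Mᴺ v`, and `Mᴺ → 0` because
`ρ(M) < 1` (Gelfand's formula). So `v ≤ 0`, i.e. `q = 1`. -/

open Filter Topology
open scoped ENNReal Matrix

theorem tendsto_pow_atTop_nhds_zero_of_spectralRadius_lt_one {A : Type*} [NormedRing A]
    [NormedAlgebra ℂ A] [CompleteSpace A] {a : A} (h : spectralRadius ℂ a < 1) :
    Tendsto (fun n : ℕ => a ^ n) atTop (𝓝 0) := by
  obtain ⟨r, hρr, hr1⟩ := ENNReal.lt_iff_exists_nnreal_btwn.mp h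
  have hroot : ∀ᶠ n : ℕ in atTop, (‖a ^ n‖₊ : ℝ≥0∞) ^ (1 / n : ℝ) < r :=
    (spectrum.pow_nnnorm_pow_one_div_tendsto_nhds_spectralRadius a).eventually_lt_const hρr
  have hbound : ∀ᶠ n : ℕ in atTop, ‖a ^ n‖ ≤ (r : ℝ) ^ n := by
    filter_upwards [hroot, eventually_ne_atTop 0] with n hn hn0
    have : (‖a ^ n‖₊ : ℝ≥0∞) ≤ (r : ℝ≥0∞) ^ n := by
      calc (‖a ^ n‖₊ : ℝ≥0∞) = ((‖a ^ n‖₊ : ℝ≥0∞) ^ (1 / n : ℝ)) ^ n := by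
            rw [← ENNReal.rpow_natCast, ← ENNReal.rpow_mul, one_div_mul_cancel (by positivity),
              ENNReal.rpow_one]
        _ ≤ (r : ℝ≥0∞) ^ n := by gcongr
    exact_mod_cast this
  exact squeeze_zero_norm' hbound
    (tendsto_pow_atTop_nhds_zero_of_lt_one r.2 (by exact_mod_cast hr1))

namespace Matrix

variable {n : Type*} [Fintype n] [DecidableEq n]

theorem tendsto_pow_atTop_nhds_zero_of_spectralRadius_map_ofReal_lt_one {M : Matrix n n ℝ}
    (h : spectralRadius ℂ (M.map Complex.ofReal) < 1) :
    Tendsto (fun N : ℕ => M ^ N) atTop (𝓝 0) := by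
  let := Matrix.linftyOpNormedRing (n := n) (α := ℂ)
  let := Matrix.linftyOpNormedAlgebra (n := n) (R := ℂ) (α := ℂ)
  have : CompleteSpace (Matrix n n ℂ) := FiniteDimensional.complete ℂ _
  have hC := tendsto_pow_atTop_nhds_zero_of_spectralRadius_lt_one h
  have hre : Continuous fun A : Matrix n n ℂ => A.map Complex.re :=
    continuous_id.matrix_map Complex.continuous_re
  have hpow (N : ℕ) : (M.map Complex.ofReal ^ N).map Complex.re = M ^ N := by
    have : M.map Complex.ofReal ^ N = Complex.ofRealHom.mapMatrix (M ^ N) := by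
      rw [map_pow]; rfl
    ext i j
    simp [this]
  simpa [Function.comp_def, hpow] using (hre.tendsto 0).comp hC

theorem le_pow_mulVec_of_le_mulVec {M : Matrix n n ℝ} (hM : ∀ i j, 0 ≤ M i j) {v : n → ℝ}
    (hv : v ≤ M *ᵥ v) (N : ℕ) : v ≤ (M ^ N) *ᵥ v := by
  induction N with
  | zero => simp
  | succ N ih =>
    calc v ≤ M *ᵥ v := hv
      _ ≤ M *ᵥ ((M ^ N) *ᵥ v) := fun i =>
          Finset.sum_le_sum fun j _ => mul_le_mul_of_nonneg_left (ih j) (hM i j)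
      _ = (M ^ (N + 1)) *ᵥ v := by rw [mulVec_mulVec, pow_succ']

theorem nonpos_of_le_mulVec_of_spectralRadius_lt_one {M : Matrix n n ℝ} (hM : ∀ i j, 0 ≤ M i j)
    (h : spectralRadius ℂ (M.map Complex.ofReal) < 1) {v : n → ℝ} (hv : v ≤ M *ᵥ v) : v ≤ 0 := by
  have hlim : Tendsto (fun N : ℕ => (M ^ N) *ᵥ v) atTop (𝓝 0) := by
    simpa [Function.comp_def] using ((continuous_id.matrix_mulVec continuous_const).tendsto 0).comp
      (tendsto_pow_atTop_nhds_zero_of_spectralRadius_map_ofReal_lt_one h)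
  exact ge_of_tendsto' hlim (le_pow_mulVec_of_le_mulVec hM hv)

end Matrix

/-- `Sum` derives its `BEq` structurally, and this is the instance `List.count` uses in
`SCFG.expectationMatrix`; the core library provides no `LawfulBEq` for it. -/
instance Sum.instLawfulBEq {α β : Type*} [BEq α] [LawfulBEq α] [BEq β] [LawfulBEq β] :
    LawfulBEq (α ⊕ β) where
  rfl {x} := by
    cases x with
    | inl a => exact beq_self_eq_true a
    | inr b => exact beq_self_eq_true b
  eq_of_beq {x y} h := by
    cases x <;> cases y <;> first | cases h | exact congrArg _ (eq_of_beq h)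

theorem List.one_sub_prod_le_sum_map_one_sub {R : Type*} [CommRing R] [PartialOrder R]
    [IsOrderedRing R] {l : List R} (h0 : ∀ x ∈ l, 0 ≤ x) (h1 : ∀ x ∈ l, x ≤ 1) :
    1 - l.prod ≤ (l.map (1 - ·)).sum := by
  induction l with
  | nil => simp
  | cons x l ih =>
    simp only [List.mem_cons, forall_eq_or_imp] at h0 h1
    have hS : 0 ≤ (l.map (1 - ·)).sum := List.sum_nonneg fun y hy => by
      obtain ⟨z, hz, rfl⟩ := List.mem_map.mp hy
      exact sub_nonneg.mpr (h1.2 z hz)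
    have ih := ih h0.2 h1.2
    calc 1 - x * l.prod = (1 - x) + x * (1 - l.prod) := by ring
      _ ≤ (1 - x) + x * (l.map (1 - ·)).sum := by gcongr; exact h0.1
      _ ≤ (1 - x) + (l.map (1 - ·)).sum := by gcongr; exact mul_le_of_le_one_left hS h1.1
      _ = ((x :: l).map (1 - ·)).sum := by simp

namespace SCFG

variable {m k : ℕ} {ρ : Type} [Fintype ρ] (G : SCFG m k ρ)

/-- Complete leftmost derivations of a sentential form, by recursion on the form: leading
terminals are skipped and the first nonterminal is rewritten. -/
inductive IsDerivation : List (Fin m ⊕ Fin k) → List ρ → Prop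
  | nil : IsDerivation [] []
  | terminal (a : Fin k) {s : List (Fin m ⊕ Fin k)} {l : List ρ} :
      IsDerivation s l → IsDerivation (.inr a :: s) l
  | rule (π : ρ) {s : List (Fin m ⊕ Fin k)} {l : List ρ} :
      IsDerivation (G.rhs π ++ s) l → IsDerivation (.inl (G.prem π) :: s) (π :: l)

variable {G}

@[simp]
theorem isDerivation_nil_iff {l : List ρ} : G.IsDerivation [] l ↔ l = [] :=
  ⟨fun h => by cases h; rfl, fun h => h ▸ .nil⟩

@[simp]
theorem isDerivation_inr_cons_iff {a : Fin k} {s : List (Fin m ⊕ Fin k)} {l : List ρ} :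
    G.IsDerivation (.inr a :: s) l ↔ G.IsDerivation s l :=
  ⟨fun h => by cases h; assumption, .terminal a⟩

theorem isDerivation_inl_cons_iff {i : Fin m} {s : List (Fin m ⊕ Fin k)} {l : List ρ} :
    G.IsDerivation (.inl i :: s) l ↔
      ∃ π l', l = π :: l' ∧ G.prem π = i ∧ G.IsDerivation (G.rhs π ++ s) l' := by
  constructor
  · intro h
    cases h with
    | rule π h => exact ⟨π, _, rfl, rfl, h⟩
  · rintro ⟨π, l', rfl, rfl, h⟩
    exact .rule π h

@[simp]
theorem isDerivation_map_inr_append_iff {u : List (Fin k)} {s : List (Fin m ⊕ Fin k)}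
    {l : List ρ} : G.IsDerivation (u.map Sum.inr ++ s) l ↔ G.IsDerivation s l := by
  induction u with
  | nil => rfl
  | cons a u ih => simpa using ih

theorem IsDerivation.append {s t : List (Fin m ⊕ Fin k)} {l₁ l₂ : List ρ}
    (h₁ : G.IsDerivation s l₁) (h₂ : G.IsDerivation t l₂) : G.IsDerivation (s ++ t) (l₁ ++ l₂) := by
  induction h₁ with
  | nil => exact h₂
  | terminal a _ ih => exact .terminal a ih
  | rule π _ ih => exact .rule π (by simpa using ih)

theorem IsDerivation.exists_of_append {s t : List (Fin m ⊕ Fin k)} {l : List ρ}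
    (h : G.IsDerivation (s ++ t) l) :
    ∃ l₁ l₂, l = l₁ ++ l₂ ∧ G.IsDerivation s l₁ ∧ G.IsDerivation t l₂ := by
  generalize hu : s ++ t = u at h
  induction h generalizing s with
  | nil =>
    obtain ⟨rfl, rfl⟩ := List.append_eq_nil_iff.mp hu
    exact ⟨[], [], rfl, .nil, .nil⟩
  | terminal a h ih =>
    rcases s with _ | ⟨x, s⟩
    · subst hu
      exact ⟨[], _, rfl, .nil, .terminal a h⟩
    · obtain ⟨rfl, hst⟩ := List.cons.inj hu
      obtain ⟨l₁, l₂, rfl, h₁, h₂⟩ := ih hst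
      exact ⟨l₁, l₂, rfl, .terminal a h₁, h₂⟩
  | rule π h ih =>
    rcases s with _ | ⟨x, s⟩
    · subst hu
      exact ⟨[], _, rfl, .nil, .rule π h⟩
    · obtain ⟨rfl, rfl⟩ := List.cons.inj hu
      obtain ⟨l₁, l₂, rfl, h₁, h₂⟩ := ih (s := G.rhs π ++ s) (List.append_assoc _ _ _)
      exact ⟨π :: l₁, l₂, rfl, .rule π h₁, h₂⟩

theorem IsDerivation.eq_nil_of_append {s : List (Fin m ⊕ Fin k)} {l l' : List ρ}
    (h : G.IsDerivation s l) (h' : G.IsDerivation s (l ++ l')) : l' = [] := by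
  induction h with
  | nil => simpa using h'
  | terminal a _ ih => exact ih (isDerivation_inr_cons_iff.mp h')
  | rule π _ ih =>
    obtain ⟨_, _, he, -, h'⟩ := isDerivation_inl_cons_iff.mp h'
    obtain ⟨rfl, rfl⟩ := List.cons.inj he
    exact ih h'

theorem IsDerivation.append_inj {s : List (Fin m ⊕ Fin k)} {l₁ l₁' l₂ l₂' : List ρ}
    (h₁ : G.IsDerivation s l₁) (h₁' : G.IsDerivation s l₁') (he : l₁ ++ l₂ = l₁' ++ l₂') :
    l₁ = l₁' ∧ l₂ = l₂' := by
  obtain ⟨d, rfl⟩ | ⟨d, rfl⟩ := List.prefix_or_prefix_of_prefix ⟨l₂, rfl⟩ ⟨l₂', he.symm⟩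
  · obtain rfl := h₁.eq_nil_of_append h₁'
    simpa using he
  · obtain rfl := h₁'.eq_nil_of_append h₁
    simpa using he

theorem stepSeq_cons_inr {s t : List (Fin m ⊕ Fin k)} {l : List ρ} (a : Fin k)
    (h : G.StepSeq s l t) : G.StepSeq (.inr a :: s) l (.inr a :: t) := by
  induction h with
  | nil s => exact .nil _
  | cons hstep _ ih =>
    obtain ⟨u, δ, rfl, rfl⟩ := hstep
    exact .cons ⟨a :: u, δ, rfl, rfl⟩ ih

theorem exists_stepSeq_isTerminalString_iff {s : List (Fin m ⊕ Fin k)} {l : List ρ} :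
    (∃ t, G.StepSeq s l t ∧ IsTerminalString t) ↔ G.IsDerivation s l := by
  constructor
  · rintro ⟨t, hst, ht⟩
    induction hst with
    | nil s =>
      obtain ⟨u, rfl⟩ := ht
      simpa using isDerivation_map_inr_append_iff (u := u) (s := []) (G := G) (l := [])
    | cons hstep _ ih =>
      obtain ⟨u, δ, rfl, rfl⟩ := hstep
      simpa using IsDerivation.rule _ (by simpa using ih ht)
  · intro h
    induction h with
    | nil => exact ⟨[], .nil _, [], rfl⟩
    | terminal a _ ih =>
      obtain ⟨t, hst, u, rfl⟩ := ih
      exact ⟨_, stepSeq_cons_inr a hst, a :: u, rfl⟩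
    | rule π _ ih =>
      obtain ⟨t, hst, ht⟩ := ih
      exact ⟨t, .cons ⟨[], _, rfl, rfl⟩ hst, ht⟩

variable (G)

@[simp]
theorem weight_nil : G.weight [] = 1 := rfl

@[simp]
theorem weight_cons (π : ρ) (l : List ρ) : G.weight (π :: l) = G.p π * G.weight l := rfl

theorem weight_append (l₁ l₂ : List ρ) : G.weight (l₁ ++ l₂) = G.weight l₁ * G.weight l₂ := by
  simp [weight]

theorem weight_nonneg (l : List ρ) : 0 ≤ G.weight l :=
  List.prod_nonneg fun _ hx => by
    obtain ⟨π, -, rfl⟩ := List.mem_map.mp hx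
    exact G.p_nonneg π

/-- The total probability of the complete derivations of `s`, taken in `[0, ∞]` so that it is
defined before anything is known about summability. -/
noncomputable def mass (s : List (Fin m ⊕ Fin k)) : ℝ≥0∞ :=
  ∑' l : {l // G.IsDerivation s l}, ENNReal.ofReal (G.weight l)

theorem tsum_isDerivation_inl_cons (i : Fin m) (s : List (Fin m ⊕ Fin k))
    (f : List ρ → ℝ≥0∞) :
    ∑' l : {l // G.IsDerivation (.inl i :: s) l}, f l =
      ∑ π ∈ Finset.univ.filter (fun π => G.prem π = i),
        ∑' l : {l // G.IsDerivation (G.rhs π ++ s) l}, f (π :: l) := by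
  let e : (Σ π : {π // G.prem π = i}, {l // G.IsDerivation (G.rhs π.1 ++ s) l}) ≃
      {l // G.IsDerivation (.inl i :: s) l} :=
    .ofBijective
      (fun x => ⟨x.1.1 :: x.2.1, isDerivation_inl_cons_iff.mpr ⟨_, _, rfl, x.1.2, x.2.2⟩⟩) <| by
      constructor
      · rintro ⟨⟨π, hπ⟩, ⟨l, hl⟩⟩ ⟨⟨π', hπ'⟩, ⟨l', hl'⟩⟩ he
        obtain ⟨rfl, rfl⟩ := List.cons.inj (congrArg Subtype.val he)
        rfl
      · rintro ⟨l, hl⟩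
        obtain ⟨π, l', rfl, hπ, hl'⟩ := isDerivation_inl_cons_iff.mp hl
        exact ⟨⟨⟨π, hπ⟩, ⟨l', hl'⟩⟩, rfl⟩
  rw [← e.tsum_eq, ENNReal.tsum_sigma', tsum_fintype]
  exact (Finset.sum_subtype _ (fun π => by simp)
    (fun π => ∑' l : {l // G.IsDerivation (G.rhs π ++ s) l}, f (π :: l))).symm

theorem mass_nil : G.mass [] = 1 := by
  rw [mass, tsum_eq_single ⟨[], .nil⟩ fun l hl => absurd (Subtype.ext (by simpa using l.2)) hl]
  simp

@[simp]
theorem mass_inr_cons (a : Fin k) (s : List (Fin m ⊕ Fin k)) :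
    G.mass (.inr a :: s) = G.mass s :=
  tsum_congr_subtype (fun l => ENNReal.ofReal (G.weight l)) fun _ => isDerivation_inr_cons_iff

theorem mass_singleton_inl (i : Fin m) :
    G.mass [.inl i] = ∑ π ∈ Finset.univ.filter (fun π => G.prem π = i),
      ENNReal.ofReal (G.p π) * G.mass (G.rhs π) := by
  rw [mass, G.tsum_isDerivation_inl_cons i [] fun l => ENNReal.ofReal (G.weight l)]
  refine Finset.sum_congr rfl fun π _ => ?_
  simp only [weight_cons, ENNReal.ofReal_mul (G.p_nonneg π), ENNReal.tsum_mul_left]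
  change _ * G.mass (G.rhs π ++ []) = _
  rw [List.append_nil]

theorem mass_append (s t : List (Fin m ⊕ Fin k)) : G.mass (s ++ t) = G.mass s * G.mass t := by
  let e : {l // G.IsDerivation s l} × {l // G.IsDerivation t l} ≃
      {l // G.IsDerivation (s ++ t) l} :=
    .ofBijective (fun x => ⟨x.1.1 ++ x.2.1, x.1.2.append x.2.2⟩) <| by
      constructor
      · rintro ⟨⟨l₁, h₁⟩, ⟨l₂, h₂⟩⟩ ⟨⟨l₁', h₁'⟩, ⟨l₂', h₂'⟩⟩ he
        obtain ⟨rfl, rfl⟩ := h₁.append_inj h₁' (congrArg Subtype.val he)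
        rfl
      · rintro ⟨l, hl⟩
        obtain ⟨l₁, l₂, rfl, h₁, h₂⟩ := hl.exists_of_append
        exact ⟨⟨⟨l₁, h₁⟩, ⟨l₂, h₂⟩⟩, rfl⟩
  rw [mass, ← e.tsum_eq, ENNReal.tsum_prod', mass, ← ENNReal.tsum_mul_right]
  refine tsum_congr fun l₁ => ?_
  rw [mass, ← ENNReal.tsum_mul_left]
  refine tsum_congr fun l₂ => ?_
  change ENNReal.ofReal (G.weight (l₁.1 ++ l₂.1)) = _
  rw [weight_append, ENNReal.ofReal_mul (G.weight_nonneg _)]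

theorem mass_eq_prod (s : List (Fin m ⊕ Fin k)) :
    G.mass s = (s.map fun x => G.mass [x]).prod := by
  induction s with
  | nil => exact G.mass_nil
  | cons x s ih => rw [← List.singleton_append, mass_append, ih]; rfl

theorem expectationMatrix_nonneg (i n : Fin m) : 0 ≤ G.expectationMatrix i n :=
  Finset.sum_nonneg fun π _ => mul_nonneg (G.p_nonneg π) (Nat.cast_nonneg _)

variable {G}

theorem Proper.sum_ofReal_p_eq_one (hG : G.Proper) (i : Fin m) :
    ∑ π ∈ Finset.univ.filter (fun π => G.prem π = i), ENNReal.ofReal (G.p π) = 1 := by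
  rw [← ENNReal.ofReal_sum_of_nonneg fun π _ => G.p_nonneg π, hG i, ENNReal.ofReal_one]

/-- A Kraft-type inequality. Truncating at length `N` makes it provable by induction: a
derivation of length `≤ N + 1` of `Aᵢ :: s` is a rule `π` followed by a derivation of length
`≤ N` of `rhs π ++ s`. -/
theorem Proper.tsum_length_le_le_one (hG : G.Proper) :
    ∀ (N : ℕ) (s : List (Fin m ⊕ Fin k)), ∑' l : {l // G.IsDerivation s l},
      (if l.1.length ≤ N then ENNReal.ofReal (G.weight l) else 0) ≤ 1
  | _, [] => by
    calc _ ≤ G.mass [] := ENNReal.tsum_le_tsum fun l => by split_ifs <;> simp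
      _ = 1 := G.mass_nil
  | N, .inr a :: s => by
    rw [tsum_congr_subtype (fun l => if l.length ≤ N then ENNReal.ofReal (G.weight l) else 0)
      fun _ => isDerivation_inr_cons_iff]
    exact hG.tsum_length_le_le_one N s
  | 0, .inl i :: s => by
    rw [G.tsum_isDerivation_inl_cons i s fun l => if l.length ≤ 0 then ENNReal.ofReal (G.weight l)
      else 0]
    simp
  | N + 1, .inl i :: s => by
    rw [G.tsum_isDerivation_inl_cons i s fun l => if l.length ≤ N + 1 then
        ENNReal.ofReal (G.weight l) else 0,
      ← hG.sum_ofReal_p_eq_one i]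
    refine Finset.sum_le_sum fun π _ => ?_
    simp only [List.length_cons, add_le_add_iff_right, weight_cons,
      ENNReal.ofReal_mul (G.p_nonneg π), ← mul_ite_zero, ENNReal.tsum_mul_left]
    exact mul_le_of_le_one_right' (hG.tsum_length_le_le_one N _)

theorem Proper.mass_le_one (hG : G.Proper) (s : List (Fin m ⊕ Fin k)) : G.mass s ≤ 1 := by
  rw [mass, ENNReal.tsum_eq_iSup_sum]
  refine iSup_le fun F => ?_
  calc ∑ l ∈ F, ENNReal.ofReal (G.weight l)
      = ∑ l ∈ F, if l.1.length ≤ F.sup (·.1.length) then ENNReal.ofReal (G.weight l) else 0 :=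
        Finset.sum_congr rfl fun l hl => (if_pos (Finset.le_sup (f := (·.1.length)) hl)).symm
    _ ≤ _ := ENNReal.sum_le_tsum F
    _ ≤ 1 := hG.tsum_length_le_le_one _ s

theorem Proper.mass_ne_top (hG : G.Proper) (s : List (Fin m ⊕ Fin k)) : G.mass s ≠ ⊤ :=
  ne_top_of_le_ne_top ENNReal.one_ne_top (hG.mass_le_one s)

theorem sum_map_one_sub_eq_sum_count {x : Fin m ⊕ Fin k → ℝ} (hterm : ∀ a, x (.inr a) = 1)
    (s : List (Fin m ⊕ Fin k)) :
    (s.map (1 - x ·)).sum = ∑ n, (s.count (.inl n) : ℝ) * (1 - x (.inl n)) := by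
  induction s with
  | nil => simp
  | cons a s ih =>
    rw [List.map_cons, List.sum_cons, ih]
    cases a with
    | inl j => simp [List.count_cons, add_mul, Finset.sum_add_distrib, add_comm]
    | inr b => simp [hterm]

theorem Proper.one_sub_le_mulVec (hG : G.Proper) {x : Fin m ⊕ Fin k → ℝ} (hx0 : ∀ a, 0 ≤ x a)
    (hx1 : ∀ a, x a ≤ 1) (hterm : ∀ a, x (.inr a) = 1)
    (hfix : ∀ i, ∑ π ∈ Finset.univ.filter (fun π => G.prem π = i),
      G.p π * ((G.rhs π).map x).prod ≤ x (.inl i)) :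
    (fun i => 1 - x (.inl i)) ≤ G.expectationMatrix *ᵥ fun i => 1 - x (.inl i) := by
  intro i
  calc 1 - x (.inl i)
      ≤ ∑ π ∈ Finset.univ.filter (fun π => G.prem π = i),
          G.p π * (1 - ((G.rhs π).map x).prod) := by
        simp only [mul_sub, mul_one, Finset.sum_sub_distrib, hG i]
        linarith [hfix i]
    _ ≤ ∑ π ∈ Finset.univ.filter (fun π => G.prem π = i),
          G.p π * ∑ n, ((G.rhs π).count (.inl n) : ℝ) * (1 - x (.inl n)) := by
        gcongr with π
        · exact G.p_nonneg π
        · rw [← sum_map_one_sub_eq_sum_count hterm]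
          simpa [Function.comp_def] using List.one_sub_prod_le_sum_map_one_sub
            (List.forall_mem_map.mpr fun a _ => hx0 a) (List.forall_mem_map.mpr fun a _ => hx1 a)
    _ = (G.expectationMatrix *ᵥ fun i => 1 - x (.inl i)) i := by
        simp only [Matrix.mulVec, dotProduct, expectationMatrix, Finset.sum_mul, Finset.mul_sum]
        rw [Finset.sum_comm]
        simp only [mul_assoc]

theorem Proper.toReal_mass_singleton_inl (hG : G.Proper) (i : Fin m) :
    (G.mass [.inl i]).toReal = ∑ π ∈ Finset.univ.filter (fun π => G.prem π = i),
      G.p π * ((G.rhs π).map fun a => (G.mass [a]).toReal).prod := by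
  rw [mass_singleton_inl, ENNReal.toReal_sum fun π _ =>
    ENNReal.mul_ne_top ENNReal.ofReal_ne_top (hG.mass_ne_top _)]
  refine Finset.sum_congr rfl fun π _ => ?_
  rw [ENNReal.toReal_mul, ENNReal.toReal_ofReal (G.p_nonneg π), mass_eq_prod]
  exact congrArg _ ((map_list_prod ENNReal.toRealHom _).trans (congrArg _ (List.map_map ..)))

theorem Proper.mass_singleton_inl_eq_one (hG : G.Proper)
    (hρ : spectralRadius ℂ (G.expectationMatrix.map Complex.ofReal) < 1) (i : Fin m) :
    G.mass [.inl i] = 1 := by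
  set q : Fin m ⊕ Fin k → ℝ := fun a => (G.mass [a]).toReal
  have hdefect : (fun i => 1 - q (.inl i)) ≤ G.expectationMatrix *ᵥ fun i => 1 - q (.inl i) :=
    hG.one_sub_le_mulVec (fun _ => ENNReal.toReal_nonneg)
      (fun a => ENNReal.toReal_le_of_le_ofReal zero_le_one (by simpa using hG.mass_le_one _))
      (fun a => by simp [q, G.mass_nil]) (fun i => (hG.toReal_mass_singleton_inl i).ge)
  have hle := Matrix.nonpos_of_le_mulVec_of_spectralRadius_lt_one G.expectationMatrix_nonneg hρ
    hdefect i
  refine le_antisymm (hG.mass_le_one _) ?_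
  rw [← ENNReal.ofReal_toReal (hG.mass_ne_top _)]
  exact ENNReal.one_le_ofReal.mpr (by simpa [sub_nonpos] using hle)

theorem hasSum_weight_toReal_mass {s : List (Fin m ⊕ Fin k)} (h : G.mass s ≠ ⊤) :
    HasSum (fun l : {l // G.IsDerivation s l} => G.weight l) (G.mass s).toReal := by
  have := ENNReal.hasSum_toReal h
  rw [← ENNReal.tsum_toReal_eq fun _ => ENNReal.ofReal_ne_top] at this
  simpa [mass, ENNReal.toReal_ofReal (G.weight_nonneg _)] using this

end SCFG

theorem scfg_consistent_all_of_spectralRadius_lt_one_general {m k : ℕ} {ρ : Type}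
    [Fintype ρ] (G : SCFG m k ρ)
    (hproper : G.Proper)
    (hρ : spectralRadius ℂ (G.expectationMatrix.map Complex.ofReal) < 1) :
    ∀ i : Fin m,
      HasSum (fun l : {l : List ρ // G.CompleteDeriv i l} => G.weight l.1) 1 := by
  intro i
  have hmass := hproper.mass_singleton_inl_eq_one hρ i
  have hsum := SCFG.hasSum_weight_toReal_mass (hproper.mass_ne_top [.inl i])
  rw [hmass, ENNReal.toReal_one] at hsum
  exact (Equiv.subtypeEquivRight (q := (G.IsDerivation [.inl i] ·))
    fun _ => SCFG.exists_stepSeq_isTerminalString_iff).hasSum_iff.mpr hsum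

/-- **Consistency at every nonterminal (Booth–Thompson)**: if a proper, reduced SCFG
(all rule probabilities positive, all nonterminals accessible and productive) has
expectation matrix of spectral radius `< 1` (as a complex matrix), then for every
nonterminal `i` the probabilities of all complete leftmost derivations starting at `i`
sum to `1`. -/
theorem scfg_consistent_all_of_spectralRadius_lt_one {m k : ℕ} [NeZero m] {ρ : Type}
    [Fintype ρ] (G : SCFG m k ρ)
    (hproper : G.Proper)
    (hpos : ∀ π, 0 < G.p π)
    (huseful : ∀ i : Fin m, G.Accessible i ∧ G.Productive i)
    (hρ : spectralRadius ℂ (G.expectationMatrix.map Complex.ofReal) < 1) :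
    ∀ i : Fin m,
      HasSum (fun l : {l : List ρ // G.CompleteDeriv i l} => G.weight l.1) 1 :=
  scfg_consistent_all_of_spectralRadius_lt_one_general G hproper hρ
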